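/- arXiv:2110.02140 — 2 statements merged into one kernel-verified Lean document; each statement's English description precedes it below -/
import Mathlib

section
/- Combining the previous two results: under the stated moment conditions on the sketch compressor U, the composed operator g ↦ U(sparse(g)) with block Top-K sparsification satisfies E‖g − U(sparse(g))‖₂² ≤ (1 − K/b)·‖g‖₂², i.e., it is a δ-approximate compressor in expectation with δ = K/b. -/
attribute [local instance] Classical.propDecidable

/-- The composed operator `g ↦ U(sparse(g))`, where `sparse` is block Top-K (keeping the
blocks in `S`, which dominate all others in `ℓ₂` norm) and the random compressor `U`
satisfies `E⟨g, U⟩ = ⟨g, sparse(g)⟩ = ‖sparse(g)‖²` and `E‖U‖² = ‖sparse(g)‖²`, is a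
`δ`-approximate compressor in expectation with `δ = K/b`. -/
theorem sketch_blockTopK_delta (b n K : ℕ) (hb : 0 < b) {Ω : Type} [Fintype Ω] [Nonempty Ω]
    (g : Fin b → Fin n → ℝ) (S : Finset (Fin b)) (hS : S.card = K)
    (htop : ∀ i ∈ S, ∀ j ∉ S, ∑ k, (g j k) ^ 2 ≤ ∑ k, (g i k) ^ 2)
    (U : Ω → Fin b → Fin n → ℝ)
    (h1 : (∑ ω, ∑ i, ∑ k, g i k * U ω i k) / (Fintype.card Ω) = ∑ i ∈ S, ∑ k, (g i k) ^ 2)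
    (h2 : (∑ ω, ∑ i, ∑ k, (U ω i k) ^ 2) / (Fintype.card Ω) = ∑ i ∈ S, ∑ k, (g i k) ^ 2) :
    (∑ ω, ∑ i, ∑ k, (g i k - U ω i k) ^ 2) / (Fintype.card Ω)
      ≤ (1 - (K : ℝ) / b) * ∑ i, ∑ k, (g i k) ^ 2 := by
  set a : Fin b → ℝ := fun i => ∑ k, (g i k) ^ 2 with ha
  set A : ℝ := ∑ i, a i with hA
  set T : ℝ := ∑ i ∈ S, a i with hT
  have hN : (0 : ℝ) < Fintype.card Ω := by
    exact_mod_cast Fintype.card_pos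
  have hNne : (Fintype.card Ω : ℝ) ≠ 0 := ne_of_gt hN
  -- expand the square
  have key : ∑ ω, ∑ i, ∑ k, (g i k - U ω i k) ^ 2
      = (Fintype.card Ω : ℝ) * A
        - 2 * (∑ ω, ∑ i, ∑ k, g i k * U ω i k)
        + ∑ ω, ∑ i, ∑ k, (U ω i k) ^ 2 := by
    have hω : ∀ ω : Ω, ∑ i, ∑ k, (g i k - U ω i k) ^ 2
        = A - 2 * (∑ i, ∑ k, g i k * U ω i k) + ∑ i, ∑ k, (U ω i k) ^ 2 := by
      intro ω
      have he : ∑ i, ∑ k, (g i k - U ω i k) ^ 2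
          = ∑ i, ∑ k, ((g i k) ^ 2 - 2 * (g i k * U ω i k) + (U ω i k) ^ 2) := by
        apply Finset.sum_congr rfl; intro i _
        apply Finset.sum_congr rfl; intro k _
        ring
      rw [he]
      simp only [Finset.sum_add_distrib, Finset.sum_sub_distrib, ← Finset.mul_sum, hA, ha]
    simp_rw [hω, Finset.sum_add_distrib, Finset.sum_sub_distrib, Finset.sum_const,
      nsmul_eq_mul, ← Finset.mul_sum, Finset.card_univ]
  have hLHS : (∑ ω, ∑ i, ∑ k, (g i k - U ω i k) ^ 2) / (Fintype.card Ω) = A - T := by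
    rw [key]
    have := h1
    have := h2
    field_simp at h1 h2 ⊢
    rw [h1, h2]
    ring
  rw [hLHS]
  -- now the combinatorial bound: K * A ≤ b * T
  have hK : K ≤ b := by
    rw [← hS]
    simpa using S.card_le_univ
  have hTnonneg : 0 ≤ T := Finset.sum_nonneg fun i _ => Finset.sum_nonneg fun k _ => sq_nonneg _
  have hsplit : A = T + ∑ i ∈ Sᶜ, a i := by
    rw [hA, hT, Finset.sum_add_sum_compl]
  have hcardc : (Sᶜ.card : ℝ) = (b : ℝ) - K := by
    have : Sᶜ.card = b - K := by
      rw [Finset.card_compl, hS]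
      simp
    rw [this]
    push_cast [Nat.cast_sub hK]
    ring
  have hcomp : (K : ℝ) * (∑ i ∈ Sᶜ, a i) ≤ ((b : ℝ) - K) * T := by
    have hterm : ∀ j ∈ Sᶜ, (K : ℝ) * a j ≤ T := by
      intro j hj
      rw [Finset.mem_compl] at hj
      have : (K : ℝ) * a j = ∑ i ∈ S, a j := by
        rw [Finset.sum_const, hS, nsmul_eq_mul]
      rw [this, hT]
      exact Finset.sum_le_sum fun i hi => htop i hi j hj
    calc (K : ℝ) * (∑ i ∈ Sᶜ, a i) = ∑ j ∈ Sᶜ, (K : ℝ) * a j := by rw [Finset.mul_sum]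
      _ ≤ ∑ _j ∈ Sᶜ, T := Finset.sum_le_sum hterm
      _ = (Sᶜ.card : ℝ) * T := by rw [Finset.sum_const, nsmul_eq_mul]
      _ = ((b : ℝ) - K) * T := by rw [hcardc]
  have hKA : (K : ℝ) * A ≤ (b : ℝ) * T := by
    rw [hsplit]
    nlinarith [hcomp, hTnonneg]
  have hb' : (0 : ℝ) < b := by exact_mod_cast hb
  have : (K : ℝ) / b * A ≤ T := by
    rw [div_mul_eq_mul_div, div_le_iff₀ hb']
    linarith [hKA]
  linarith [this, hsplit]
end

section
/- For error-feedback SGD with a δ-approximate compressor on an L-smooth function f bounded below by f*, the accumulated error memory e_t satisfies the recursive bound ‖e_{t+1}‖² ≤ (1−δ)·‖e_t + η g_t‖², and hence if gradients are uniformly bounded by G, then ‖e_t‖² ≤ 4η²(1−δ)G²/δ² for all t. -/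
/-- Error-feedback SGD with a `δ`-approximate compressor: with `e 0 = 0` and
`e (t+1) = p_t - U(p_t)` where `p_t = e t + η • g t`, the error satisfies the recursive
bound `‖e_{t+1}‖² ≤ (1-δ)‖e_t + η g_t‖²`, and if `‖g_t‖ ≤ G` for all `t`, then
`‖e_t‖² ≤ 4η²(1-δ)G²/δ²` for all `t`. -/
theorem error_feedback_bound (d : ℕ) (δ η G : ℝ) (hδ : δ ∈ Set.Ioo (0 : ℝ) 1)
    (hη : 0 < η) (hG : 0 ≤ G)
    (U : EuclideanSpace ℝ (Fin d) → EuclideanSpace ℝ (Fin d))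
    (hU : ∀ p, ‖p - U p‖ ^ 2 ≤ (1 - δ) * ‖p‖ ^ 2)
    (g : ℕ → EuclideanSpace ℝ (Fin d)) (hg : ∀ t, ‖g t‖ ≤ G)
    (e : ℕ → EuclideanSpace ℝ (Fin d)) (he0 : e 0 = 0)
    (hrec : ∀ t, e (t + 1) = (e t + η • g t) - U (e t + η • g t)) :
    (∀ t, ‖e (t + 1)‖ ^ 2 ≤ (1 - δ) * ‖e t + η • g t‖ ^ 2) ∧
    (∀ t, ‖e t‖ ^ 2 ≤ 4 * η ^ 2 * (1 - δ) * G ^ 2 / δ ^ 2) := by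
  obtain ⟨hδ0, hδ1⟩ := hδ
  have hpart1 : ∀ t, ‖e (t + 1)‖ ^ 2 ≤ (1 - δ) * ‖e t + η • g t‖ ^ 2 := by
    intro t
    rw [hrec t]
    exact hU _
  refine ⟨hpart1, ?_⟩
  set s : ℝ := Real.sqrt (1 - δ) with hs
  have h1δ : (0:ℝ) ≤ 1 - δ := by linarith
  have hs0 : 0 ≤ s := Real.sqrt_nonneg _
  have hs2 : s ^ 2 = 1 - δ := Real.sq_sqrt h1δ
  have hs1 : s < 1 := by
    nlinarith [hs2]
  set B : ℝ := 2 * η * s * G / δ with hB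
  have hB0 : 0 ≤ B := by positivity
  have key : ∀ t, ‖e t‖ ≤ B := by
    intro t
    induction t with
    | zero => simp [he0, hB0]
    | succ n ih =>
      have h1 : ‖e (n + 1)‖ ^ 2 ≤ (1 - δ) * ‖e n + η • g n‖ ^ 2 := hpart1 n
      have h2 : ‖e n + η • g n‖ ≤ B + η * G := by
        calc ‖e n + η • g n‖ ≤ ‖e n‖ + ‖η • g n‖ := norm_add_le _ _
          _ ≤ B + η * G := by
            have : ‖η • g n‖ = η * ‖g n‖ := by
              rw [norm_smul, Real.norm_eq_abs, abs_of_pos hη]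
            rw [this]
            have := hg n
            nlinarith
      have h3 : ‖e (n + 1)‖ ^ 2 ≤ (s * (B + η * G)) ^ 2 := by
        have hbn : 0 ≤ B + η * G := by positivity
        calc ‖e (n + 1)‖ ^ 2 ≤ (1 - δ) * ‖e n + η • g n‖ ^ 2 := h1
          _ ≤ (1 - δ) * (B + η * G) ^ 2 := by
            apply mul_le_mul_of_nonneg_left _ h1δ
            exact pow_le_pow_left₀ (norm_nonneg _) h2 2
          _ = (s * (B + η * G)) ^ 2 := by rw [mul_pow, hs2]
      have h4 : ‖e (n + 1)‖ ≤ s * (B + η * G) := by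
        have hsb : 0 ≤ s * (B + η * G) := by positivity
        nlinarith [norm_nonneg (e (n + 1))]
      refine h4.trans ?_
      -- s * (B + ηG) ≤ B, where B = 2ηsG/δ, δ = 1 - s²
      rw [hB]
      rw [div_add' _ _ _ (ne_of_gt hδ0), ← mul_div_assoc, div_le_div_iff₀ hδ0 hδ0]
      have hδs : δ = 1 - s ^ 2 := by linarith
      rw [hδs]
      have h1s2 : (0:ℝ) ≤ 1 - s ^ 2 := by linarith
      nlinarith [mul_nonneg (mul_nonneg (mul_nonneg (mul_nonneg hη.le hG) hs0) h1s2)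
        (sq_nonneg (s - 1))]
  intro t
  have h := key t
  have hBsq : B ^ 2 = 4 * η ^ 2 * (1 - δ) * G ^ 2 / δ ^ 2 := by
    rw [hB, div_pow, ← hs2]
    ring
  rw [← hBsq]
  exact pow_le_pow_left₀ (norm_nonneg _) h 2
end
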